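/- Let $\Lambda$ be a finite group, $\Sigma$ a generating set of $\Lambda$, $\pi$ the uniform probability measure on $\Lambda$, and $d(\mu,\pi) = (\sum_g (\mu(g)-\pi(g))^2)^{1/2}$. For every $\delta > 0$ there exists $K > 0$ such that: for every $\eta > 0$ and every probability measure $\mu$ on $\Lambda$ with $\mu(\sigma) \geq \eta$ for all $\sigma \in \Sigma \cup \{e\}$, and every $n > K/\eta$, one has $d(\mu^{*n}, \pi) \leq \delta$. -/

import Mathlib

/-- Convolution of two measures on a finite group. -/
noncomputable def convF {Λ : Type*} [Group Λ] [Fintype Λ] (μ ν : Λ → ℝ) : Λ → ℝ :=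
  fun g => ∑ h, μ h * ν (h⁻¹ * g)

/-- `n`-fold convolution power `μ^{*n}` on a finite group (with `μ^{*0} = δ_e`). -/
noncomputable def convPowF {Λ : Type*} [Group Λ] [Fintype Λ] (μ : Λ → ℝ) : ℕ → Λ → ℝ
  | 0 => Set.indicator {(1 : Λ)} (fun _ => (1 : ℝ))
  | n + 1 => convF μ (convPowF μ n)

namespace Stmt11Aux

open Finset

set_option linter.unusedSectionVars false

variable {Λ : Type*} [Group Λ] [Fintype Λ] [DecidableEq Λ]

noncomputable abbrev E (Λ : Type*) [Fintype Λ] := EuclideanSpace ℝ Λ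

def toE (f : Λ → ℝ) : E Λ := WithLp.toLp 2 f

@[simp] lemma toE_apply (f : Λ → ℝ) (g : Λ) : toE f g = f g := rfl

lemma E_ext {x y : E Λ} (h : ∀ g, x g = y g) : x = y := WithLp.ofLp_injective 2 (funext h)

lemma E_sum_apply (s : Finset Λ) (v : Λ → E Λ) (g : Λ) :
    (∑ h ∈ s, v h) g = ∑ h ∈ s, v h g := by
  classical
  induction s using Finset.induction with
  | empty => rfl
  | insert h _ _ ih => rw [Finset.sum_insert ‹_›, Finset.sum_insert ‹_›, ← ih]; rfl

lemma E_norm_eq (x : E Λ) : ‖x‖ = Real.sqrt (∑ g, (x g) ^ 2) := by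
  rw [EuclideanSpace.norm_eq]; simp [sq_abs]

/-- left translation on `E`. -/
def tr (h : Λ) (f : E Λ) : E Λ := toE (fun g => f (h⁻¹ * g))

@[simp] lemma tr_apply (h : Λ) (f : E Λ) (g : Λ) : tr h f g = f (h⁻¹ * g) := rfl

lemma norm_tr (h : Λ) (f : E Λ) : ‖tr h f‖ = ‖f‖ := by
  rw [E_norm_eq, E_norm_eq]
  congr 1
  exact Fintype.sum_equiv (Equiv.mulLeft h⁻¹) _ _ (fun g => rfl)

@[simp] lemma tr_one (f : E Λ) : tr 1 f = f := by
  apply E_ext; intro g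
  show f (1⁻¹ * g) = f g
  rw [inv_one, one_mul]

lemma sum_tr (h : Λ) (f : E Λ) : ∑ g, tr h f g = ∑ g, f g :=
  Fintype.sum_equiv (Equiv.mulLeft h⁻¹) _ _ (fun g => rfl)

/-- Convolution as sum of translations. -/
lemma convF_eq_sum (μ : Λ → ℝ) (f : E Λ) :
    toE (convF μ f) = ∑ h, μ h • tr h f := by
  apply E_ext
  intro g
  rw [E_sum_apply]
  simp [convF]

lemma norm_conv_le (μ : Λ → ℝ) (hμ : ∀ g, 0 ≤ μ g) (f : E Λ) :
    ‖toE (convF μ f)‖ ≤ (∑ h, μ h) * ‖f‖ := by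
  rw [convF_eq_sum]
  calc ‖∑ h, μ h • tr h f‖ ≤ ∑ h, ‖μ h • tr h f‖ := norm_sum_le _ _
    _ = ∑ h, μ h * ‖f‖ := by
        apply Finset.sum_congr rfl; intro h _
        rw [norm_smul, norm_tr, Real.norm_eq_abs, abs_of_nonneg (hμ h)]
    _ = (∑ h, μ h) * ‖f‖ := by rw [Finset.sum_mul]

lemma sum_convF (μ ν : Λ → ℝ) :
    ∑ g, convF μ ν g = (∑ h, μ h) * (∑ g, ν g) := by
  rw [Finset.sum_mul]
  unfold convF
  rw [Finset.sum_comm]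
  apply Finset.sum_congr rfl; intro h _
  rw [← Finset.mul_sum]
  congr 1
  exact Fintype.sum_equiv (Equiv.mulLeft h⁻¹) _ _ (fun g => rfl)

/-- uniform measure on a finset -/
noncomputable def unif (T : Finset Λ) : Λ → ℝ :=
  fun h => if h ∈ T then ((T.card : ℝ))⁻¹ else 0

lemma unif_nonneg (T : Finset Λ) (g : Λ) : 0 ≤ unif T g := by
  unfold unif; split <;> positivity

lemma sum_unif {T : Finset Λ} (hT : T.Nonempty) : ∑ g, unif T g = 1 := by
  have hc : (0:ℝ) < (T.card : ℝ) := by exact_mod_cast Finset.card_pos.mpr hT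
  unfold unif
  rw [Finset.sum_ite_mem, Finset.univ_inter, Finset.sum_const, nsmul_eq_mul,
    mul_inv_cancel₀ (ne_of_gt hc)]

/-- the sum linear functional, continuous -/
noncomputable def sumL (Λ : Type*) [Fintype Λ] : E Λ →ₗ[ℝ] ℝ where
  toFun f := ∑ g, f g
  map_add' f g := by
    simp only [← Finset.sum_add_distrib]; rfl
  map_smul' c f := by
    simp only [RingHom.id_apply, smul_eq_mul, Finset.mul_sum]
    apply Finset.sum_congr rfl; intros; rfl

@[simp] lemma sumL_apply (f : E Λ) : sumL Λ f = ∑ g, f g := rfl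

/-- convolution by `μ` as a linear map on `E`. -/
noncomputable def convL (μ : Λ → ℝ) : E Λ →ₗ[ℝ] E Λ where
  toFun f := toE (convF μ f)
  map_add' f g := by
    apply E_ext; intro x
    show convF μ (f + g) x = convF μ f x + convF μ g x
    simp [convF, mul_add, Finset.sum_add_distrib]
  map_smul' c f := by
    apply E_ext; intro x
    show convF μ (c • f) x = c * convF μ f x
    simp [convF, Finset.mul_sum]
    apply Finset.sum_congr rfl; intros; ring

@[simp] lemma convL_apply (μ : Λ → ℝ) (f : E Λ) : convL μ f = toE (convF μ f) := rfl

lemma strict_bound (Sgen : Finset Λ) (hgen : Subgroup.closure (Sgen : Set Λ) = ⊤)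
    (f : E Λ) (hsum : ∑ g, f g = 0) (hnorm : ‖f‖ = 1) :
    ‖convL (unif (insert 1 Sgen)) f‖ < 1 := by
  classical
  set T : Finset Λ := insert (1:Λ) Sgen with hT
  have h1T : (1:Λ) ∈ T := Finset.mem_insert_self _ _
  have hTne : T.Nonempty := ⟨1, h1T⟩
  have hmpos : (0:ℝ) < (T.card : ℝ) := by exact_mod_cast Finset.card_pos.mpr hTne
  -- there is a generator not fixing f
  have hex : ∃ s ∈ Sgen, tr s f ≠ f := by
    by_contra hcon
    push_neg at hcon
    have hinv : ∀ h : Λ, ∀ g, f (h⁻¹ * g) = f g := by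
      intro h
      have hmem : h ∈ Subgroup.closure (Sgen : Set Λ) := by rw [hgen]; exact Subgroup.mem_top h
      induction hmem using Subgroup.closure_induction with
      | mem x hx =>
          intro g
          have := hcon x hx
          calc f (x⁻¹ * g) = tr x f g := rfl
            _ = f g := by rw [this]
      | one => intro g; rw [inv_one, one_mul]
      | mul a b _ _ ha hb =>
          intro g
          calc f ((a*b)⁻¹ * g) = f (b⁻¹ * (a⁻¹ * g)) := by rw [mul_inv_rev, mul_assoc]
            _ = f (a⁻¹ * g) := hb _
            _ = f g := ha _
      | inv a _ ha =>
          intro g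
          have := ha (a * g)
          rw [inv_mul_cancel_left] at this
          rw [inv_inv, ← this]
    have hconst : ∀ g : Λ, f g = f 1 := by
      intro g
      have := hinv g⁻¹ 1
      rw [inv_inv, mul_one] at this
      exact this
    have hzero : f 1 = 0 := by
      have hcard : (0:ℝ) < (Fintype.card Λ : ℝ) := by
        exact_mod_cast Fintype.card_pos
      have : ∑ g : Λ, f g = (Fintype.card Λ : ℝ) * f 1 := by
        rw [Finset.sum_congr rfl (fun g _ => hconst g), Finset.sum_const, nsmul_eq_mul,
          Fintype.card]
      rw [hsum] at this
      have := this.symm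
      rcases mul_eq_zero.mp this with h | h
      · exact absurd h (ne_of_gt hcard)
      · exact h
    have : f = 0 := by
      apply E_ext; intro g; rw [hconst g, hzero]; rfl
    rw [this, norm_zero] at hnorm
    exact one_ne_zero hnorm.symm
  obtain ⟨s, hsS, hsne⟩ := hex
  have hs1 : s ≠ 1 := fun h => hsne (by rw [h, tr_one])
  have hsT : s ∈ T := Finset.mem_insert_of_mem hsS
  -- restrict the sum to T
  have hrw : toE (convF (unif T) f) = ∑ h ∈ T, ((T.card:ℝ))⁻¹ • tr h f := by
    rw [convF_eq_sum]
    rw [← Finset.sum_subset (Finset.subset_univ T)]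
    · apply Finset.sum_congr rfl; intro h hh
      simp [unif, hh]
    · intro h _ hh
      simp [unif, hh]
  -- split off 1 and s
  have hsplit : ∑ h ∈ T, ((T.card:ℝ))⁻¹ • tr h f
      = (((T.card:ℝ))⁻¹ • f + ((T.card:ℝ))⁻¹ • tr s f)
        + ∑ h ∈ (T.erase 1).erase s, ((T.card:ℝ))⁻¹ • tr h f := by
    have hsE : s ∈ T.erase 1 := Finset.mem_erase.mpr ⟨hs1, hsT⟩
    rw [← Finset.sum_erase_add T _ h1T, ← Finset.sum_erase_add (T.erase 1) _ hsE, tr_one]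
    abel
  have hcard2 : 2 ≤ T.card := by
    have : ({1, s} : Finset Λ) ⊆ T := by
      intro x hx
      rcases Finset.mem_insert.mp hx with rfl | hx
      · exact h1T
      · rw [Finset.mem_singleton.mp hx]; exact hsT
    calc 2 = ({1, s} : Finset Λ).card := by
            rw [Finset.card_insert_of_notMem (by simpa using hs1.symm), Finset.card_singleton]
      _ ≤ T.card := Finset.card_le_card this
  have hRcard : (((T.erase 1).erase s).card : ℝ) = (T.card : ℝ) - 2 := by
    have hsE : s ∈ T.erase 1 := Finset.mem_erase.mpr ⟨hs1, hsT⟩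
    rw [Finset.card_erase_of_mem hsE, Finset.card_erase_of_mem h1T]
    have h1 : 1 ≤ T.card - 1 := by omega
    push_cast [Nat.cast_sub (by omega : 1 ≤ T.card), Nat.cast_sub h1]
    ring
  -- the strict convexity bound
  have hts : ‖tr s f‖ = 1 := by rw [norm_tr, hnorm]
  have hip : (inner ℝ f (tr s f) : ℝ) < 1 := by
    apply lt_of_le_of_ne
    · have := real_inner_le_norm f (tr s f)
      rwa [hnorm, hts, one_mul] at this
    · intro h
      exact hsne ((inner_eq_one_iff_of_norm_eq_one hnorm hts).mp h).symm
  have hkey : ‖f + tr s f‖ < 2 := by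
    have h4 : ‖f + tr s f‖ ^ 2 < 4 := by
      rw [norm_add_sq_real, hnorm, hts]
      nlinarith
    nlinarith [norm_nonneg (f + tr s f)]
  -- put it together
  have hnorm_le : ‖convL (unif T) f‖
      < ((T.card:ℝ))⁻¹ * 2 + (((T.card:ℝ)) - 2) * ((T.card:ℝ))⁻¹ := by
    rw [convL_apply, hrw, hsplit]
    have h1 : ‖(((T.card:ℝ))⁻¹ • f + ((T.card:ℝ))⁻¹ • tr s f)
        + ∑ h ∈ (T.erase 1).erase s, ((T.card:ℝ))⁻¹ • tr h f‖
        ≤ ‖((T.card:ℝ))⁻¹ • f + ((T.card:ℝ))⁻¹ • tr s f‖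
          + ∑ h ∈ (T.erase 1).erase s, ‖((T.card:ℝ))⁻¹ • tr h f‖ :=
      le_trans (norm_add_le _ _) (by gcongr; exact norm_sum_le _ _)
    have h2 : ‖((T.card:ℝ))⁻¹ • f + ((T.card:ℝ))⁻¹ • tr s f‖
        = ((T.card:ℝ))⁻¹ * ‖f + tr s f‖ := by
      rw [← smul_add, norm_smul, Real.norm_eq_abs, abs_of_pos (by positivity)]
    have h3 : ∑ h ∈ (T.erase 1).erase s, ‖((T.card:ℝ))⁻¹ • tr h f‖
        = ((T.card:ℝ) - 2) * ((T.card:ℝ))⁻¹ := by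
      rw [Finset.sum_congr rfl (fun h _ => by
        rw [norm_smul, norm_tr, hnorm, mul_one, Real.norm_eq_abs,
          abs_of_pos (by positivity : (0:ℝ) < ((T.card:ℝ))⁻¹)])]
      rw [Finset.sum_const, nsmul_eq_mul, hRcard]
    calc ‖_ + _‖ ≤ _ := h1
      _ = ((T.card:ℝ))⁻¹ * ‖f + tr s f‖ + ((T.card:ℝ) - 2) * ((T.card:ℝ))⁻¹ := by
          rw [h2, h3]
      _ < ((T.card:ℝ))⁻¹ * 2 + ((T.card:ℝ) - 2) * ((T.card:ℝ))⁻¹ := by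
          have : (0:ℝ) < ((T.card:ℝ))⁻¹ := by positivity
          nlinarith
  have hfin : ((T.card:ℝ))⁻¹ * 2 + (((T.card:ℝ)) - 2) * ((T.card:ℝ))⁻¹ = 1 := by
    field_simp
    ring
  rw [hfin] at hnorm_le
  exact hnorm_le

lemma gap (Sgen : Finset Λ) (hgen : Subgroup.closure (Sgen : Set Λ) = ⊤) :
    ∃ c : ℝ, 0 ≤ c ∧ c < 1 ∧
      ∀ f : E Λ, (∑ g, f g = 0) → ‖convL (unif (insert 1 Sgen)) f‖ ≤ c * ‖f‖ := by
  classical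
  set u := unif (insert (1:Λ) Sgen) with hu
  set Kset : Set (E Λ) := (sumL Λ ⁻¹' {0}) ∩ Metric.sphere 0 1 with hKset
  have hclosed : IsClosed (sumL Λ ⁻¹' {0} : Set (E Λ)) :=
    IsClosed.preimage (LinearMap.continuous_of_finiteDimensional _) isClosed_singleton
  have hKc : IsCompact Kset := (isCompact_sphere (0 : E Λ) 1).inter_left hclosed
  have hcont : Continuous fun f : E Λ => ‖convL u f‖ :=
    ((convL u).continuous_of_finiteDimensional).norm
  have hmemK : ∀ f : E Λ, f ≠ 0 → (∑ g, f g = 0) → (‖f‖⁻¹ • f) ∈ Kset := by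
    intro f hf0 hf
    constructor
    · show sumL Λ (‖f‖⁻¹ • f) ∈ ({0} : Set ℝ)
      rw [map_smul]
      have : sumL Λ f = 0 := hf
      simp [this]
    · show ‖f‖⁻¹ • f ∈ Metric.sphere (0 : E Λ) 1
      rw [mem_sphere_zero_iff_norm]
      exact norm_smul_inv_norm hf0
  have hscale : ∀ f : E Λ, f ≠ 0 → ∀ c : ℝ, ‖convL u (‖f‖⁻¹ • f)‖ ≤ c → ‖convL u f‖ ≤ c * ‖f‖ := by
    intro f hf0 c hc
    have hn : ‖f‖ ≠ 0 := norm_ne_zero_iff.mpr hf0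
    have : convL u f = ‖f‖ • convL u (‖f‖⁻¹ • f) := by
      rw [map_smul, smul_smul, mul_inv_cancel₀ hn, one_smul]
    rw [this, norm_smul, Real.norm_eq_abs, abs_of_pos (lt_of_le_of_ne (norm_nonneg f) (Ne.symm hn))]
    rw [mul_comm c ‖f‖]
    exact mul_le_mul_of_nonneg_left hc (norm_nonneg f)
  by_cases hne : Kset.Nonempty
  · obtain ⟨f₀, hf₀, hmax⟩ := hKc.exists_isMaxOn hne hcont.continuousOn
    have hf₀sum : ∑ g, f₀ g = 0 := hf₀.1
    have hf₀norm : ‖f₀‖ = 1 := mem_sphere_zero_iff_norm.mp hf₀.2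
    refine ⟨‖convL u f₀‖, norm_nonneg _, strict_bound Sgen hgen f₀ hf₀sum hf₀norm, ?_⟩
    intro f hf
    rcases eq_or_ne f 0 with rfl | hf0
    · rw [map_zero, norm_zero]; positivity
    · exact hscale f hf0 _ (hmax (hmemK f hf0 hf))
  · refine ⟨0, le_refl 0, zero_lt_one, ?_⟩
    intro f hf
    rcases eq_or_ne f 0 with rfl | hf0
    · rw [map_zero, norm_zero]; positivity
    · exact absurd ⟨_, hmemK f hf0 hf⟩ hne

lemma contraction (Sgen : Finset Λ) {c η : ℝ} (hc0 : 0 ≤ c) (hc1 : c < 1)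
    (hgap : ∀ f : E Λ, (∑ g, f g = 0) → ‖convL (unif (insert 1 Sgen)) f‖ ≤ c * ‖f‖)
    (hη : 0 < η) (μ : Λ → ℝ) (hpos : ∀ g, 0 ≤ μ g) (hsum1 : ∑ g, μ g = 1)
    (hlow : ∀ σ ∈ insert (1:Λ) Sgen, η ≤ μ σ)
    (f : E Λ) (hf : ∑ g, f g = 0) :
    ‖toE (convF μ f)‖ ≤ (1 - η * (1 - c)) * ‖f‖ := by
  classical
  set T : Finset Λ := insert (1:Λ) Sgen with hTdef
  set m : ℝ := (T.card : ℝ) with hmdef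
  have h1T : (1:Λ) ∈ T := Finset.mem_insert_self _ _
  have hm1 : (1:ℝ) ≤ m := by
    have h : 1 ≤ T.card := Finset.card_pos.mpr ⟨1, h1T⟩
    rw [hmdef]
    exact_mod_cast h
  have hm0 : m ≠ 0 := by linarith
  set u : Λ → ℝ := unif T with hudef
  set ρ : Λ → ℝ := fun h => μ h - (η * m) * u h with hρdef
  have hρ : ∀ h, 0 ≤ ρ h := by
    intro h
    by_cases hh : h ∈ T
    · have hu : u h = m⁻¹ := by simp [hudef, unif, hh, hmdef]
      have he : η * m * m⁻¹ = η := by field_simp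
      simp only [hρdef, hu, he]
      linarith [hlow h hh]
    · have hu : u h = 0 := by simp [hudef, unif, hh]
      simp only [hρdef, hu, mul_zero, sub_zero]
      exact hpos h
  have hρsum : ∑ h, ρ h = 1 - η * m := by
    simp only [hρdef]
    rw [Finset.sum_sub_distrib, hsum1, ← Finset.mul_sum, sum_unif ⟨1, h1T⟩, mul_one]
  have hdecomp : toE (convF μ f) = toE (convF ρ f) + (η * m) • toE (convF u f) := by
    apply E_ext; intro g
    show convF μ f g = convF ρ f g + (η*m) * convF u f g
    simp only [convF, hρdef, Finset.mul_sum]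
    rw [← Finset.sum_add_distrib]
    apply Finset.sum_congr rfl; intros; ring
  have hρnorm : ‖toE (convF ρ f)‖ ≤ (1 - η*m) * ‖f‖ := by
    have := norm_conv_le ρ hρ f
    rwa [hρsum] at this
  have hunorm : ‖toE (convF u f)‖ ≤ c * ‖f‖ := hgap f hf
  have hbound : ‖toE (convF μ f)‖ ≤ (1 - η*m) * ‖f‖ + (η*m) * (c * ‖f‖) := by
    rw [hdecomp]
    calc ‖toE (convF ρ f) + (η * m) • toE (convF u f)‖
        ≤ ‖toE (convF ρ f)‖ + ‖(η*m) • toE (convF u f)‖ := norm_add_le _ _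
      _ ≤ (1-η*m)*‖f‖ + (η*m)*(c*‖f‖) := by
          rw [norm_smul, Real.norm_eq_abs, abs_of_nonneg (by positivity)]
          exact add_le_add hρnorm (mul_le_mul_of_nonneg_left hunorm (by positivity))
  have hfn : (0:ℝ) ≤ ‖f‖ := norm_nonneg f
  have hfinal : (1 - η*m)*‖f‖ + (η*m)*(c*‖f‖) ≤ (1 - η*(1-c))*‖f‖ := by
    nlinarith [mul_nonneg (mul_nonneg (mul_nonneg hη.le (by linarith : (0:ℝ) ≤ 1 - c))
      (by linarith : (0:ℝ) ≤ m - 1)) hfn]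
  linarith

end Stmt11Aux

open Stmt11Aux

/-- Quantitative equidistribution on a finite group `Λ` with generating set `Sgen`:
for every `δ > 0` there is `K > 0` such that for every `η > 0` and every probability
measure `μ` with `μ(σ) ≥ η` for all `σ ∈ Sgen ∪ {e}`, and every `n > K/η`, the Euclidean
distance from `μ^{*n}` to the uniform measure `π` is at most `δ`. -/
theorem stmt_11 {Λ : Type*} [Group Λ] [Fintype Λ] [DecidableEq Λ] (Sgen : Finset Λ)
    (hgen : Subgroup.closure (Sgen : Set Λ) = ⊤) (δ : ℝ) (hδ : 0 < δ) :
    ∃ K > (0 : ℝ), ∀ η : ℝ, 0 < η →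
      ∀ μ : Λ → ℝ, (∀ g, 0 ≤ μ g) → (∑ g, μ g = 1) →
        (∀ σ ∈ insert (1 : Λ) Sgen, η ≤ μ σ) →
        ∀ n : ℕ, K / η < n →
          Real.sqrt (∑ g, (convPowF μ n g - ((Fintype.card Λ : ℝ))⁻¹) ^ 2) ≤ δ := by
  classical
  obtain ⟨c, hc0, hc1, hgap⟩ := gap Sgen hgen
  set c₀ : ℝ := 1 - c with hc₀def
  have hc₀ : 0 < c₀ := by simp only [hc₀def]; linarith
  set K : ℝ := max 1 (Real.log (2/δ) / c₀) with hKdef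
  refine ⟨K, lt_of_lt_of_le zero_lt_one (le_max_left _ _), ?_⟩
  intro η hη μ hpos hsum1 hlow n hn
  have hη1 : η ≤ 1 := by
    have h1 : η ≤ μ 1 := hlow 1 (Finset.mem_insert_self _ _)
    have h2 : μ 1 ≤ ∑ g, μ g := Finset.single_le_sum (fun g _ => hpos g) (Finset.mem_univ 1)
    rw [hsum1] at h2
    linarith
  set q : ℝ := 1 - η * c₀ with hqdef
  have hq0 : 0 ≤ q := by
    simp only [hqdef, hc₀def]
    nlinarith
  set N : ℝ := (Fintype.card Λ : ℝ) with hNdef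
  have hN : 0 < N := by
    simp only [hNdef]
    exact_mod_cast Fintype.card_pos
  have hN1 : 1 ≤ N := by
    simp only [hNdef]
    exact_mod_cast Fintype.card_pos
  set D : ℕ → E Λ := fun k => toE (fun g => convPowF μ k g - N⁻¹) with hDdef
  have hD0sum : ∑ g, D 0 g = 0 := by
    show ∑ g : Λ, (Set.indicator {(1:Λ)} (fun _ => (1:ℝ)) g - N⁻¹) = 0
    rw [Finset.sum_sub_distrib]
    have h1 : ∑ g : Λ, Set.indicator {(1:Λ)} (fun _ => (1:ℝ)) g = 1 := by
      simp only [Set.indicator_apply, Set.mem_singleton_iff]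
      rw [Finset.sum_ite_eq' Finset.univ (1:Λ) (fun _ => (1:ℝ))]
      simp
    rw [h1, Finset.sum_const, nsmul_eq_mul]
    have hcard0 : ((Finset.univ : Finset Λ).card : ℝ) = N := by rw [hNdef]; rfl
    rw [hcard0, mul_inv_cancel₀ (ne_of_gt hN), sub_self]
  have hD0norm : ‖D 0‖ ≤ 2 := by
    have hsplit : D 0 = toE (Set.indicator {(1:Λ)} (fun _ => (1:ℝ)))
        - toE (fun _ => N⁻¹) := by
      apply E_ext; intro g; rfl
    rw [hsplit]
    have h1 : ‖toE (Set.indicator {(1:Λ)} (fun _ => (1:ℝ)))‖ = 1 := by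
      rw [E_norm_eq]
      have : ∑ g : Λ, (toE (Set.indicator {(1:Λ)} (fun _ => (1:ℝ))) g)^2 = 1 := by
        simp only [toE_apply, Set.indicator_apply, Set.mem_singleton_iff]
        rw [Finset.sum_congr rfl (fun g _ => by
          show (if g = 1 then (1:ℝ) else 0)^2 = if g = 1 then (1:ℝ) else 0
          split <;> norm_num)]
        rw [Finset.sum_ite_eq' Finset.univ (1:Λ) (fun _ => (1:ℝ))]
        simp
      rw [this, Real.sqrt_one]
    have h2 : ‖toE (fun _ : Λ => N⁻¹)‖ ≤ 1 := by
      rw [E_norm_eq]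
      have : ∑ g : Λ, (toE (fun _ : Λ => N⁻¹) g)^2 = N⁻¹ := by
        simp only [toE_apply]
        rw [Finset.sum_const, nsmul_eq_mul]
        have hcard : ((Finset.univ : Finset Λ).card : ℝ) = N := by rw [hNdef]; rfl
        rw [hcard, sq, ← mul_assoc, mul_inv_cancel₀ (ne_of_gt hN), one_mul]
      rw [this, show (1:ℝ) = Real.sqrt 1 from (Real.sqrt_one).symm]
      apply Real.sqrt_le_sqrt
      rw [inv_le_one_iff₀]
      right; exact hN1
    calc ‖_ - _‖ ≤ _ + _ := norm_sub_le _ _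
      _ ≤ 1 + 1 := add_le_add h1.le h2
      _ = 2 := by norm_num
  have hDrec : ∀ k, toE (convF μ (fun g => convPowF μ k g - N⁻¹)) = D (k+1) := by
    intro k
    apply E_ext; intro g
    show convF μ (fun g => convPowF μ k g - N⁻¹) g = convPowF μ (k+1) g - N⁻¹
    show (∑ h, μ h * (convPowF μ k (h⁻¹*g) - N⁻¹)) = convF μ (convPowF μ k) g - N⁻¹
    simp only [mul_sub, convF]
    rw [Finset.sum_sub_distrib, ← Finset.sum_mul, hsum1, one_mul]
  have hmain : ∀ k, (∑ g, D k g = 0) ∧ ‖D k‖ ≤ q ^ k * ‖D 0‖ := by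
    intro k
    induction k with
    | zero => exact ⟨hD0sum, by rw [pow_zero, one_mul]⟩
    | succ k ih =>
      obtain ⟨ihs, ihn⟩ := ih
      have hstep := contraction Sgen hc0 hc1 hgap hη μ hpos hsum1 hlow (D k) ihs
      constructor
      · rw [← hDrec k]
        show ∑ g, convF μ (fun g => convPowF μ k g - N⁻¹) g = 0
        rw [sum_convF, hsum1, one_mul]
        exact ihs
      · have hq : (1 - η * (1 - c)) = q := by rw [hqdef, hc₀def]
        rw [hq] at hstep
        have hstep' : ‖D (k+1)‖ ≤ q * ‖D k‖ := by
          rw [← hDrec k]; exact hstep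
        calc ‖D (k+1)‖ ≤ q * ‖D k‖ := hstep'
          _ ≤ q * (q ^ k * ‖D 0‖) := mul_le_mul_of_nonneg_left ihn hq0
          _ = q ^ (k+1) * ‖D 0‖ := by ring
  -- final numeric estimate
  have hgoal : Real.sqrt (∑ g, (convPowF μ n g - N⁻¹) ^ 2) = ‖D n‖ := by
    rw [E_norm_eq]
    rfl
  rw [hgoal]
  have hqexp : q ≤ Real.exp (-(η * c₀)) := by
    have := Real.add_one_le_exp (-(η * c₀))
    simp only [hqdef]
    linarith
  have hpow : q ^ n ≤ Real.exp (-(η * c₀)) ^ n := pow_le_pow_left₀ hq0 hqexp n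
  have hexp : Real.exp (-(η * c₀)) ^ n = Real.exp ((n:ℝ) * (-(η * c₀))) :=
    (Real.exp_nat_mul _ n).symm
  have hKn : K < n * η := by
    rw [div_lt_iff₀ hη] at hn
    linarith [hn]
  have hKlog : Real.log (2/δ) ≤ K * c₀ := by
    have : Real.log (2/δ) / c₀ ≤ K := le_max_right _ _
    rw [div_le_iff₀ hc₀] at this
    linarith
  have hexple : Real.exp ((n:ℝ) * (-(η * c₀))) ≤ δ / 2 := by
    have h2δ : (0:ℝ) < 2/δ := by positivity
    have hlog : (n:ℝ) * (-(η * c₀)) ≤ Real.log (δ/2) := by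
      have : Real.log (δ/2) = - Real.log (2/δ) := by
        rw [show δ/2 = (2/δ)⁻¹ by rw [inv_div], Real.log_inv]
      rw [this]
      have hnc : K * c₀ < (n:ℝ) * η * c₀ := by
        apply mul_lt_mul_of_pos_right hKn hc₀
      nlinarith
    calc Real.exp ((n:ℝ) * (-(η * c₀))) ≤ Real.exp (Real.log (δ/2)) :=
          Real.exp_le_exp.mpr hlog
      _ = δ/2 := Real.exp_log (by positivity)
  calc ‖D n‖ ≤ q ^ n * ‖D 0‖ := (hmain n).2
    _ ≤ q ^ n * 2 := mul_le_mul_of_nonneg_left hD0norm (pow_nonneg hq0 n)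
    _ ≤ Real.exp ((n:ℝ) * (-(η * c₀))) * 2 := by
        rw [← hexp]
        exact mul_le_mul_of_nonneg_right hpow (by norm_num)
    _ ≤ (δ/2) * 2 := mul_le_mul_of_nonneg_right hexple (by norm_num)
    _ = δ := by ring
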